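/- F″(b) > 0 for all real b with 0 < b ≤ 6/5 (= 1.2). -/

import Mathlib

/-- The restriction of `A2` to the diagonal. -/
noncomputable def F (b : ℝ) : ℝ :=
  (9 + 96*b + 396*b^2 + 840*b^3 + 954*b^4 + 528*b^5 + 96*b^6) /
  (1 + 12*b + 54*b^2 + 120*b^3 + 138*b^4 + 72*b^5 + 12*b^6)

/-- The denominator of `F`. -/
def Dp (x : ℝ) : ℝ := 1 + 12*x + 54*x^2 + 120*x^3 + 138*x^4 + 72*x^5 + 12*x^6

/-- The numerator of `F'` (times `Dp²`). -/
def Pp (x : ℝ) : ℝ :=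
  -12 - 180*x - 1152*x^2 - 4032*x^3 - 8160*x^4 - 8640*x^5 - 1440*x^6
    + 7488*x^7 + 8496*x^8 + 3600*x^9 + 576*x^10

/-- The first derivative of `F` on `(0, ∞)`. -/
noncomputable def G (x : ℝ) : ℝ := Pp x / (Dp x)^2

lemma Dp_pos {x : ℝ} (hx : 0 < x) : 0 < Dp x := by
  unfold Dp; positivity

lemma hasDerivAt_Dp (x : ℝ) :
    HasDerivAt Dp (12 + 108*x + 360*x^2 + 552*x^3 + 360*x^4 + 72*x^5) x := by
  have h := (((((((hasDerivAt_const x (1:ℝ)).add ((hasDerivAt_id x).const_mul 12)).add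
    ((hasDerivAt_pow 2 x).const_mul 54)).add ((hasDerivAt_pow 3 x).const_mul 120)).add
    ((hasDerivAt_pow 4 x).const_mul 138)).add ((hasDerivAt_pow 5 x).const_mul 72)).add
    ((hasDerivAt_pow 6 x).const_mul 12))
  refine h.congr_deriv ?_; push_cast; ring

lemma hasDerivAt_N (x : ℝ) :
    HasDerivAt (fun y : ℝ => 9 + 96*y + 396*y^2 + 840*y^3 + 954*y^4 + 528*y^5 + 96*y^6)
      (96 + 792*x + 2520*x^2 + 3816*x^3 + 2640*x^4 + 576*x^5) x := by
  have h := (((((((hasDerivAt_const x (9:ℝ)).add ((hasDerivAt_id x).const_mul 96)).add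
    ((hasDerivAt_pow 2 x).const_mul 396)).add ((hasDerivAt_pow 3 x).const_mul 840)).add
    ((hasDerivAt_pow 4 x).const_mul 954)).add ((hasDerivAt_pow 5 x).const_mul 528)).add
    ((hasDerivAt_pow 6 x).const_mul 96))
  refine h.congr_deriv ?_; push_cast; ring

lemma hasDerivAt_Pp (x : ℝ) :
    HasDerivAt Pp (-180 - 2304*x - 12096*x^2 - 32640*x^3 - 43200*x^4 - 8640*x^5
      + 52416*x^6 + 67968*x^7 + 32400*x^8 + 5760*x^9) x := by
  have h := (((((((((((hasDerivAt_const x (-12:ℝ)).sub ((hasDerivAt_id x).const_mul 180)).sub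
    ((hasDerivAt_pow 2 x).const_mul 1152)).sub ((hasDerivAt_pow 3 x).const_mul 4032)).sub
    ((hasDerivAt_pow 4 x).const_mul 8160)).sub ((hasDerivAt_pow 5 x).const_mul 8640)).sub
    ((hasDerivAt_pow 6 x).const_mul 1440)).add ((hasDerivAt_pow 7 x).const_mul 7488)).add
    ((hasDerivAt_pow 8 x).const_mul 8496)).add ((hasDerivAt_pow 9 x).const_mul 3600)).add
    ((hasDerivAt_pow 10 x).const_mul 576))
  refine h.congr_deriv ?_
  push_cast; ring

lemma hasDerivAt_F {x : ℝ} (hx : 0 < x) : HasDerivAt F (G x) x := by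
  have hD := hasDerivAt_Dp x
  have hN := hasDerivAt_N x
  have hDne : Dp x ≠ 0 := (Dp_pos hx).ne'
  have h := hN.div hD hDne
  have : F = fun y : ℝ =>
      (9 + 96*y + 396*y^2 + 840*y^3 + 954*y^4 + 528*y^5 + 96*y^6) / Dp y := by
    funext y; simp [F, Dp]
  rw [this]
  refine h.congr_deriv ?_
  unfold G Pp Dp
  unfold Dp at hDne
  field_simp
  ring

/-- `F'' b > 0` for all `b` with `0 < b ≤ 6/5`. -/
theorem deriv2_F_pos (b : ℝ) (hb : 0 < b) (hb' : b ≤ 6/5) :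
    0 < deriv (deriv F) b := by
  have hDb : 0 < Dp b := Dp_pos hb
  -- deriv F agrees with G near b
  have hev : deriv F =ᶠ[nhds b] G := by
    filter_upwards [eventually_gt_nhds hb] with x hx
    exact (hasDerivAt_F hx).deriv
  rw [Filter.EventuallyEq.deriv_eq hev]
  -- derivative of G at b
  have hDsq : HasDerivAt (fun x => (Dp x)^2)
      (2 * Dp b ^ 1 * (12 + 108*b + 360*b^2 + 552*b^3 + 360*b^4 + 72*b^5)) b := by
    exact ((hasDerivAt_Dp b).pow 2).congr_deriv (by simp)
  have hG : HasDerivAt G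
      (((-180 - 2304*b - 12096*b^2 - 32640*b^3 - 43200*b^4 - 8640*b^5
        + 52416*b^6 + 67968*b^7 + 32400*b^8 + 5760*b^9) * (Dp b)^2
        - Pp b * (2 * Dp b ^ 1 * (12 + 108*b + 360*b^2 + 552*b^3 + 360*b^4 + 72*b^5)))
        / ((Dp b)^2)^2) b := by
    exact (hasDerivAt_Pp b).div hDsq (by positivity)
  rw [hG.deriv]
  -- positivity of the numerator
  have h11 : b^11 ≤ (6/5) * b^10 := by nlinarith [pow_pos hb 10, pow_pos hb 11]
  have h12 : b^12 ≤ (6/5)^2 * b^10 := by nlinarith [pow_pos hb 10, pow_pos hb 11, pow_pos hb 12, h11]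
  have h13 : b^13 ≤ (6/5)^3 * b^10 := by nlinarith [pow_pos hb 12, pow_pos hb 13, h12]
  have h14 : b^14 ≤ (6/5)^4 * b^10 := by nlinarith [pow_pos hb 13, pow_pos hb 14, h13]
  have h15 : b^15 ≤ (6/5)^5 * b^10 := by nlinarith [pow_pos hb 14, pow_pos hb 15, h14]
  have hQ : 0 < 108 + 2448*b + 25704*b^2 + 164640*b^3 + 714168*b^4 + 2204064*b^5
      + 4944528*b^6 + 8073216*b^7 + 9394704*b^8 + 7333056*b^9 + 3173472*b^10
      - 31104*b^11 - 899424*b^12 - 508032*b^13 - 129600*b^14 - 13824*b^15 := by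
    nlinarith [h11, h12, h13, h14, h15, pow_pos hb 1, pow_pos hb 2, pow_pos hb 3,
      pow_pos hb 4, pow_pos hb 5, pow_pos hb 6, pow_pos hb 7, pow_pos hb 8,
      pow_pos hb 9, pow_pos hb 10]
  have hnum : (-180 - 2304*b - 12096*b^2 - 32640*b^3 - 43200*b^4 - 8640*b^5
        + 52416*b^6 + 67968*b^7 + 32400*b^8 + 5760*b^9) * (Dp b)^2
        - Pp b * (2 * Dp b ^ 1 * (12 + 108*b + 360*b^2 + 552*b^3 + 360*b^4 + 72*b^5))
      = Dp b * (108 + 2448*b + 25704*b^2 + 164640*b^3 + 714168*b^4 + 2204064*b^5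
      + 4944528*b^6 + 8073216*b^7 + 9394704*b^8 + 7333056*b^9 + 3173472*b^10
      - 31104*b^11 - 899424*b^12 - 508032*b^13 - 129600*b^14 - 13824*b^15) := by
    unfold Dp Pp; ring
  rw [hnum]
  positivity
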